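/- Let Y be finite, π_ref fully supported, β > 0, and D a finite preference multiset. The set Π_PPO of policies of the form π(y) ∝ π_ref(y)·exp(r(y)/β) for r minimizing L_R is contained in the set Π_DPO of minimizers of L_DPO over fully supported policies, and in general this containment can be strict (Π_PPO ⊊ Π_DPO when degenerate reference support is allowed, as in the three-action counter-example). -/

import Mathlib

/-! The DPO loss of a policy `π` is the Bradley–Terry loss of its implicit reward
`β log (π / π_ref)`. For the Gibbs policy `π_ref exp (r / β) / Z` this implicit reward is
`r - β log Z`, and the pairwise loss only sees reward differences, so a PPO policy built from
a reward minimizer attains the least DPO loss. For strictness, a policy putting mass on an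
action outside the support of `π_ref` minimizes the counter-example loss without being of
Gibbs form. -/

section PairwiseLoss

variable {Y : Type*}

/-- The common shape of the Bradley–Terry loss `L_R` and the DPO loss `L_DPO`. -/
noncomputable def pairwiseLoss (σ : ℝ → ℝ) (D : Multiset (Y × Y)) (r : Y → ℝ) : ℝ :=
  -(D.map fun p => Real.log (σ (r p.1 - r p.2))).sum

theorem pairwiseLoss_add_const (σ : ℝ → ℝ) (D : Multiset (Y × Y)) (r : Y → ℝ)
    (c : ℝ) :
    pairwiseLoss σ D (fun y => r y + c) = pairwiseLoss σ D r := by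
  simp only [pairwiseLoss, add_sub_add_right_eq_sub]

noncomputable def implicitReward (β : ℝ) (πref π : Y → ℝ) (y : Y) : ℝ :=
  β * Real.log (π y / πref y)

end PairwiseLoss

section Gibbs

variable {Y : Type*} [Fintype Y]

noncomputable def gibbsPolicy (πref : Y → ℝ) (β : ℝ) (r : Y → ℝ) (y : Y) : ℝ :=
  πref y * Real.exp (r y / β) / ∑ y', πref y' * Real.exp (r y' / β)

variable [Nonempty Y] {πref : Y → ℝ} {β : ℝ}

theorem gibbsPolicy_partition_pos (href_pos : ∀ y, 0 < πref y) (r : Y → ℝ) :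
    0 < ∑ y, πref y * Real.exp (r y / β) :=
  Finset.sum_pos (fun y _ => mul_pos (href_pos y) (Real.exp_pos _)) Finset.univ_nonempty

theorem gibbsPolicy_pos (href_pos : ∀ y, 0 < πref y) (r : Y → ℝ) (y : Y) :
    0 < gibbsPolicy πref β r y :=
  div_pos (mul_pos (href_pos y) (Real.exp_pos _)) (gibbsPolicy_partition_pos href_pos r)

theorem sum_gibbsPolicy (href_pos : ∀ y, 0 < πref y) (r : Y → ℝ) :
    ∑ y, gibbsPolicy πref β r y = 1 := by
  simp only [gibbsPolicy]
  rw [← Finset.sum_div, div_self (gibbsPolicy_partition_pos href_pos r).ne']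

theorem implicitReward_gibbsPolicy (href_pos : ∀ y, 0 < πref y) (hβ : β ≠ 0)
    (r : Y → ℝ) :
    implicitReward β πref (gibbsPolicy πref β r) =
      fun y => r y + -(β * Real.log (∑ y', πref y' * Real.exp (r y' / β))) := by
  funext y
  have hZ := (gibbsPolicy_partition_pos (β := β) href_pos r).ne'
  have hratio : gibbsPolicy πref β r y / πref y =
      Real.exp (r y / β) / ∑ y', πref y' * Real.exp (r y' / β) := by
    rw [gibbsPolicy, mul_div_assoc, mul_div_cancel_left₀ _ (href_pos y).ne']
  rw [implicitReward, hratio, Real.log_div (Real.exp_ne_zero _) hZ, Real.log_exp, mul_sub,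
    mul_div_cancel₀ _ hβ, sub_eq_add_neg]

theorem pairwiseLoss_implicitReward_gibbsPolicy_le (href_pos : ∀ y, 0 < πref y) (hβ : β ≠ 0)
    (σ : ℝ → ℝ) (D : Multiset (Y × Y)) {rstar : Y → ℝ}
    (hmin : ∀ r, pairwiseLoss σ D rstar ≤ pairwiseLoss σ D r) (π : Y → ℝ) :
    pairwiseLoss σ D (implicitReward β πref (gibbsPolicy πref β rstar)) ≤
      pairwiseLoss σ D (implicitReward β πref π) := by
  rw [implicitReward_gibbsPolicy href_pos hβ, pairwiseLoss_add_const]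
  exact hmin _

end Gibbs

theorem not_forall_eq_gibbs_of_ref_eq_zero {Y : Type*} {πref π : Y → ℝ} {y : Y}
    (href : πref y = 0) (hπ : π y ≠ 0) (β : ℝ) (r : Y → ℝ) (Z : ℝ) :
    ¬ ∀ y, π y = πref y * Real.exp (r y / β) / Z := fun h =>
  hπ (by rw [h y, href, zero_mul, zero_div])

theorem log_one_add_rpow_nonneg {x : ℝ} (hx : 0 ≤ x) (β : ℝ) : 0 ≤ Real.log (1 + x ^ β) :=
  Real.log_nonneg (by linarith [Real.rpow_nonneg hx β])

theorem stmt_8_general {Y : Type*} [Fintype Y] [Nonempty Y]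
    (πref : Y → ℝ) (href_pos : ∀ y, 0 < πref y)
    (β : ℝ) (hβ : 0 < β)
    (D : Multiset (Y × Y))
    (σ : ℝ → ℝ)
    (LR : (Y → ℝ) → ℝ)
    (hLR : ∀ r : Y → ℝ, LR r = -(D.map (fun p => Real.log (σ (r p.1 - r p.2)))).sum)
    (LDPO : (Y → ℝ) → ℝ)
    (hLDPO : ∀ π : Y → ℝ, LDPO π = -(D.map (fun p => Real.log (σ
        (β * Real.log (π p.1 / πref p.1) - β * Real.log (π p.2 / πref p.2))))).sum)
    -- the three-action counter-example with degenerate reference support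
    (πref₃ : Fin 3 → ℝ) (hπref₃ : πref₃ = ![1/2, 1/2, 0])
    (L₃ : (Fin 3 → ℝ) → ℝ)
    (hL₃ : ∀ π : Fin 3 → ℝ, L₃ π = Real.log (1 + (π 1 / π 0) ^ β)) :
    -- Π_PPO ⊆ Π_DPO:
    (∀ rstar : Y → ℝ, (∀ r : Y → ℝ, LR rstar ≤ LR r) →
      ∀ πPPO : Y → ℝ,
        (∀ y, πPPO y = πref y * Real.exp (rstar y / β) /
            (∑ y', πref y' * Real.exp (rstar y' / β))) →
        ((∀ y, 0 < πPPO y) ∧ (∑ y, πPPO y = 1) ∧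
          ∀ π : Y → ℝ, (∀ y, 0 < π y) → (∑ y, π y = 1) → LDPO πPPO ≤ LDPO π)) ∧
    -- strictness: a DPO-loss minimizer that is not of PPO form
    (∃ π : Fin 3 → ℝ, (∀ y, 0 ≤ π y) ∧ (∑ y, π y = 1) ∧
      L₃ π = 0 ∧
      (∀ π' : Fin 3 → ℝ, (∀ y, 0 ≤ π' y) → (∑ y, π' y = 1) → 0 ≤ L₃ π') ∧
      (∀ r : Fin 3 → ℝ, ∀ Z : ℝ, 0 < Z →
        ¬ (∀ y, π y = πref₃ y * Real.exp (r y / β) / Z))) := by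
  have hLR' : LR = pairwiseLoss σ D := funext hLR
  have hLDPO' : LDPO = fun π => pairwiseLoss σ D (implicitReward β πref π) := funext hLDPO
  refine ⟨fun rstar hmin πPPO hπ => ?_, ⟨![1/2, 0, 1/2], ?_, ?_, ?_, ?_, ?_⟩⟩
  · obtain rfl : πPPO = gibbsPolicy πref β rstar := funext hπ
    subst hLR' hLDPO'
    exact ⟨gibbsPolicy_pos href_pos rstar, sum_gibbsPolicy href_pos rstar,
      fun π _ _ => pairwiseLoss_implicitReward_gibbsPolicy_le href_pos hβ.ne' σ D hmin π⟩
  · intro y; fin_cases y <;> norm_num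
  · norm_num [Fin.sum_univ_three, Matrix.cons_val_two, Matrix.tail_cons, Matrix.head_cons]
  · norm_num [hL₃, Real.zero_rpow hβ.ne']
  · exact fun π' hnn _ => hL₃ π' ▸ log_one_add_rpow_nonneg (div_nonneg (hnn 1) (hnn 0)) β
  · exact fun r Z _ => not_forall_eq_gibbs_of_ref_eq_zero (y := 2) (by simp [hπref₃])
      (by simp) β r Z

/-- Theorem 4.1 (single-prompt finite setting): every PPO solution (KL-regularized optimum
of a Bradley–Terry-loss-minimizing reward) minimizes the DPO loss; and the containment can
be strict when degenerate reference support is allowed (three-action counter-example with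
`π_ref = (1/2,1/2,0)` and the single pair `y₁ ≻ y₂`). -/
theorem stmt_8 {Y : Type*} [Fintype Y] [Nonempty Y]
    (πref : Y → ℝ) (href_pos : ∀ y, 0 < πref y) (href_sum : ∑ y, πref y = 1)
    (β : ℝ) (hβ : 0 < β)
    (D : Multiset (Y × Y))
    (σ : ℝ → ℝ) (hσ : ∀ x, σ x = 1 / (1 + Real.exp (-x)))
    (LR : (Y → ℝ) → ℝ)
    (hLR : ∀ r : Y → ℝ, LR r = -(D.map (fun p => Real.log (σ (r p.1 - r p.2)))).sum)
    (LDPO : (Y → ℝ) → ℝ)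
    (hLDPO : ∀ π : Y → ℝ, LDPO π = -(D.map (fun p => Real.log (σ
        (β * Real.log (π p.1 / πref p.1) - β * Real.log (π p.2 / πref p.2))))).sum)
    -- the three-action counter-example with degenerate reference support
    (πref₃ : Fin 3 → ℝ) (hπref₃ : πref₃ = ![1/2, 1/2, 0])
    (L₃ : (Fin 3 → ℝ) → ℝ)
    (hL₃ : ∀ π : Fin 3 → ℝ, L₃ π = Real.log (1 + (π 1 / π 0) ^ β)) :
    -- Π_PPO ⊆ Π_DPO:
    (∀ rstar : Y → ℝ, (∀ r : Y → ℝ, LR rstar ≤ LR r) →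
      ∀ πPPO : Y → ℝ,
        (∀ y, πPPO y = πref y * Real.exp (rstar y / β) /
            (∑ y', πref y' * Real.exp (rstar y' / β))) →
        ((∀ y, 0 < πPPO y) ∧ (∑ y, πPPO y = 1) ∧
          ∀ π : Y → ℝ, (∀ y, 0 < π y) → (∑ y, π y = 1) → LDPO πPPO ≤ LDPO π)) ∧
    -- strictness: a DPO-loss minimizer that is not of PPO form
    (∃ π : Fin 3 → ℝ, (∀ y, 0 ≤ π y) ∧ (∑ y, π y = 1) ∧
      L₃ π = 0 ∧
      (∀ π' : Fin 3 → ℝ, (∀ y, 0 ≤ π' y) → (∑ y, π' y = 1) → 0 ≤ L₃ π') ∧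
      (∀ r : Fin 3 → ℝ, ∀ Z : ℝ, 0 < Z →
        ¬ (∀ y, π y = πref₃ y * Real.exp (r y / β) / Z))) :=
  stmt_8_general πref href_pos β hβ D σ LR hLR LDPO hLDPO πref₃ hπref₃ L₃ hL₃
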